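/- For the dihedral quandle R_3 with values in Z_3, the shadow-type sum formula: for any quandle 3-cocycle θ on R_3, and for the specific θ = χ_{0,1,0}⁻¹ χ_{0,2,0} χ_{0,2,1}⁻¹ χ_{1,0,1} χ_{1,0,2} χ_{2,0,2} χ_{2,1,2}, the sum Σ_{(x,y)} θ(x, x*y, x) θ(x,y,x) θ(y,x,y)⁻¹ θ(x*y,x,x*y)⁻¹ over R_3 × R_3 and the sum with θ replaced by its inverse-orientation analogue Σ_{(x,y)} θ(x, x*y, x)⁻¹ θ(x,y,x)⁻¹ θ(y,x,y) θ(x*y,x,x*y) are 3 + 6u and 3 + 6u² respectively; in particular, they are distinct elements of Z[Z_3]. -/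

import Mathlib

/-- The dihedral quandle operation on `R_3 = ZMod 3`. -/
def dop (i j : ZMod 3) : ZMod 3 := 2 * j - i

/-- The generator `u` of `Z_3 = ⟨u | u³ = 1⟩` (written multiplicatively). -/
def u3 : Multiplicative (ZMod 3) := Multiplicative.ofAdd 1

/-- The characteristic function `χ_{x,y,z}`. -/
def chi3 (x y z a b c : ZMod 3) : Multiplicative (ZMod 3) :=
  if (a, b, c) = (x, y, z) then u3 else 1

/-- `θ = χ_{0,1,0}⁻¹ χ_{0,2,0} χ_{0,2,1}⁻¹ χ_{1,0,1} χ_{1,0,2} χ_{2,0,2} χ_{2,1,2}`. -/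
def theta3 (a b c : ZMod 3) : Multiplicative (ZMod 3) :=
  (chi3 0 1 0 a b c)⁻¹ * chi3 0 2 0 a b c * (chi3 0 2 1 a b c)⁻¹ *
    chi3 1 0 1 a b c * chi3 1 0 2 a b c * chi3 2 0 2 a b c * chi3 2 1 2 a b c

lemma zsum18 (f : ZMod 3 → MonoidAlgebra ℤ (Multiplicative (ZMod 3))) :
    ∑ x : ZMod 3, f x = f 0 + f 1 + f 2 := by
  show ∑ x : Fin 3, f x = _
  exact Fin.sum_univ_three f

lemma fval18 : ∀ x y : ZMod 3, theta3 x (dop x y) x * theta3 x y x * (theta3 y x y)⁻¹ *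
    (theta3 (dop x y) x (dop x y))⁻¹ = if x = y then 1 else u3 := by decide

lemma gval18 : ∀ x y : ZMod 3, (theta3 x (dop x y) x)⁻¹ * (theta3 x y x)⁻¹ * theta3 y x y *
    theta3 (dop x y) x (dop x y) = if x = y then 1 else u3 ^ 2 := by decide

/-- The state-sum `Σ θ(x,x*y,x) θ(x,y,x) θ(y,x,y)⁻¹ θ(x*y,x,x*y)⁻¹` equals `3 + 6u`,
its inverse-orientation analogue equals `3 + 6u²`, and the two are distinct elements
of `ℤ[Z_3]`. -/
theorem stmt18 :
    (∑ x : ZMod 3, ∑ y : ZMod 3,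
      (MonoidAlgebra.single
        (theta3 x (dop x y) x * theta3 x y x * (theta3 y x y)⁻¹ *
          (theta3 (dop x y) x (dop x y))⁻¹) (1 : ℤ) :
        MonoidAlgebra ℤ (Multiplicative (ZMod 3)))) =
      MonoidAlgebra.single 1 3 + MonoidAlgebra.single u3 6 ∧
    (∑ x : ZMod 3, ∑ y : ZMod 3,
      (MonoidAlgebra.single
        ((theta3 x (dop x y) x)⁻¹ * (theta3 x y x)⁻¹ * theta3 y x y *
          theta3 (dop x y) x (dop x y)) (1 : ℤ) :
        MonoidAlgebra ℤ (Multiplicative (ZMod 3)))) =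
      MonoidAlgebra.single 1 3 + MonoidAlgebra.single (u3 ^ 2) 6 ∧
    (MonoidAlgebra.single (1 : Multiplicative (ZMod 3)) (3 : ℤ) + MonoidAlgebra.single u3 6 ≠
      MonoidAlgebra.single 1 3 + MonoidAlgebra.single (u3 ^ 2) 6) := by
  refine ⟨?_, ?_, ?_⟩
  · simp only [fval18]
    rw [zsum18]; rw [zsum18, zsum18, zsum18]
    simp (config := { decide := true }) only [if_true, if_false]
    rw [show (3:ℤ) = 1+1+1 from rfl, show (6:ℤ) = 1+1+1+1+1+1 from rfl]
    simp only [MonoidAlgebra.single_add]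
    abel
  · simp only [gval18]
    rw [zsum18]; rw [zsum18, zsum18, zsum18]
    simp (config := { decide := true }) only [if_true, if_false]
    rw [show (3:ℤ) = 1+1+1 from rfl, show (6:ℤ) = 1+1+1+1+1+1 from rfl]
    simp only [MonoidAlgebra.single_add]
    abel
  · intro h
    have h' := congrArg MonoidAlgebra.coeff h
    simp only [MonoidAlgebra.coeff_add, MonoidAlgebra.coeff_single] at h'
    have h2 := DFunLike.congr_fun h' u3
    rw [Finsupp.add_apply, Finsupp.add_apply, Finsupp.single_apply, Finsupp.single_apply] at h2
    rw [if_neg (show (1 : Multiplicative (ZMod 3)) ≠ u3 by decide), if_pos rfl] at h2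
    rw [Finsupp.single_apply, if_neg (show u3 ^ 2 ≠ u3 by decide)] at h2
    norm_num at h2
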